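/- arXiv:1708.06605 — 4 statements merged into one kernel-verified Lean document; each statement's English description precedes it below -/
import Mathlib

section
/- Let φ : ℝ → ℝ be smooth with compact support and let x ∈ ℝ. Then (J^α φ)(x) tends to φ(x) as α tends to 0 from the right; that is, the distributional differintegral of order 0 is the identity on test functions. -/
open MeasureTheory Real Filter Topology

/-- The Riemann–Liouville fractional integral of order `α` with lower limit `-∞`
(the paper's distributional differintegral `𝒮^α`). -/
noncomputable def J (α : ℝ) (f : ℝ → ℝ) (x : ℝ) : ℝ :=
  (1 / Real.Gamma α) * ∫ τ in Set.Iic x, f τ * (x - τ) ^ (α - 1)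

/-- Integrability of `g τ * (x - τ) ^ β` on `Iic x` for continuous compactly
supported `g` and `β > -1`. -/
lemma aux_integrableOn {g : ℝ → ℝ} (hg : Continuous g) (hgs : HasCompactSupport g)
    (x : ℝ) {β : ℝ} (hβ : -1 < β) :
    IntegrableOn (fun τ => g τ * (x - τ) ^ β) (Set.Iic x) := by
  obtain ⟨r, hr⟩ := hgs.isBounded.subset_closedBall 0
  set c := min x (-r - 1) with hc
  have hcx : c ≤ x := min_le_left _ _
  have hzero : ∀ τ ≤ c, g τ = 0 := by
    intro τ hτ
    by_contra h
    have hmem : τ ∈ Metric.closedBall (0 : ℝ) r :=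
      hr (subset_tsupport g (by simpa using h))
    have : |τ| ≤ r := by simpa [Real.dist_eq] using hmem
    have h1 : τ ≤ -r - 1 := le_trans hτ (min_le_right _ _)
    have h2 : -r ≤ τ := neg_le_of_abs_le this
    linarith
  have h1 : IntegrableOn (fun τ => g τ * (x - τ) ^ β) (Set.Iic c) := by
    have : Set.EqOn (fun τ => g τ * (x - τ) ^ β) 0 (Set.Iic c) := fun τ hτ => by
      simp [hzero τ hτ]
    exact (integrableOn_zero (s := Set.Iic c)).congr_fun this.symm measurableSet_Iic
  have h2 : IntegrableOn (fun τ => g τ * (x - τ) ^ β) (Set.Ioc c x) := by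
    have hint : IntervalIntegrable (fun τ => (x - τ) ^ β) volume c x := by
      have := (intervalIntegral.intervalIntegrable_rpow' hβ (a := x - c)
        (b := x - x)).comp_sub_left x
      simpa using this
    have := hint.continuousOn_mul (g := g) hg.continuousOn
    exact (intervalIntegrable_iff_integrableOn_Ioc_of_le hcx).mp this
  have := h1.union h2
  rwa [Set.Iic_union_Ioc_eq_Iic hcx] at this

/-- Integration by parts for the Riemann–Liouville integral. -/
lemma aux_ibp (φ : ℝ → ℝ) (hφ : ContDiff ℝ (⊤ : ℕ∞) φ) (hsupp : HasCompactSupport φ)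
    (x : ℝ) {α : ℝ} (hα : 0 < α) :
    ∫ τ in Set.Iic x, φ τ * (x - τ) ^ (α - 1)
      = (1 / α) * ∫ τ in Set.Iic x, deriv φ τ * (x - τ) ^ α := by
  set F : ℝ → ℝ := fun τ => φ τ * (x - τ) ^ α / α with hF
  have hint1 : IntegrableOn (fun τ => φ τ * (x - τ) ^ (α - 1)) (Set.Iic x) :=
    aux_integrableOn hφ.continuous hsupp x (by linarith)
  have hint2 : IntegrableOn (fun τ => deriv φ τ * (x - τ) ^ α) (Set.Iic x) :=
    aux_integrableOn (hφ.continuous_deriv (by simp)) hsupp.deriv x (by linarith)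
  have hrpowc : Continuous fun τ : ℝ => (x - τ) ^ α := by
    refine continuous_iff_continuousAt.2 fun τ => ?_
    exact (Real.continuousAt_rpow_const _ _ (Or.inr hα.le)).comp
      ((continuous_const.sub continuous_id).continuousAt)
  have hFc : Continuous F := (hφ.continuous.mul hrpowc).div_const α
  have hd : ∀ τ ∈ Set.Iio x,
      HasDerivAt F (deriv φ τ * (x - τ) ^ α / α - φ τ * (x - τ) ^ (α - 1)) τ := by
    intro τ hτ
    have hb : (0 : ℝ) < x - τ := sub_pos.mpr hτ
    have h1 : HasDerivAt (fun t => (x - t) ^ α) (α * (x - τ) ^ (α - 1) * (-1)) τ :=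
      (Real.hasDerivAt_rpow_const (x := x - τ) (p := α) (Or.inl hb.ne')).comp τ
        ((hasDerivAt_id τ).const_sub x)
    have h2 : HasDerivAt φ (deriv φ τ) τ := (hφ.differentiable (by simp) τ).hasDerivAt
    have := (h2.mul h1).div_const α
    convert this using 1
    · rfl
    · rfl
    · rfl
    field_simp
    ring
  have hbot : Tendsto F atBot (𝓝 0) := by
    obtain ⟨r, hr⟩ := hsupp.isBounded.subset_closedBall 0
    have hev : F =ᶠ[atBot] (fun _ => 0) := by
      filter_upwards [eventually_le_atBot (-r - 1)] with τ hτ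
      have hφ0 : φ τ = 0 := by
        by_contra h
        have hmem : τ ∈ Metric.closedBall (0 : ℝ) r :=
          hr (subset_tsupport φ (by simpa using h))
        have : |τ| ≤ r := by simpa [Real.dist_eq] using hmem
        have := neg_le_of_abs_le this
        linarith
      simp [hF, hφ0]
    exact Tendsto.congr' hev.symm tendsto_const_nhds
  have hint' : IntegrableOn
      (fun τ => deriv φ τ * (x - τ) ^ α / α - φ τ * (x - τ) ^ (α - 1)) (Set.Iic x) :=
    (hint2.div_const α).sub hint1
  have key := integral_Iic_of_hasDerivAt_of_tendsto (f := F)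
    (f' := fun τ => deriv φ τ * (x - τ) ^ α / α - φ τ * (x - τ) ^ (α - 1))
    hFc.continuousWithinAt hd hint' hbot
  have hFx : F x = 0 := by simp [hF, Real.zero_rpow hα.ne']
  rw [hFx, sub_zero, integral_sub (hint2.div_const α) hint1, integral_div] at key
  have : ∫ τ in Set.Iic x, φ τ * (x - τ) ^ (α - 1)
      = (∫ τ in Set.Iic x, deriv φ τ * (x - τ) ^ α) / α := by linarith
  rw [this]; ring

/-- The distributional differintegral of order `0` is the identity on test functions:
`(J^α φ)(x) → φ(x)` as `α → 0⁺`. -/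
theorem differintegral_zero_identity (φ : ℝ → ℝ) (hφ : ContDiff ℝ (⊤ : ℕ∞) φ)
    (hsupp : HasCompactSupport φ) (x : ℝ) :
    Tendsto (fun α => J α φ x) (𝓝[>] 0) (𝓝 (φ x)) := by
  have hψc : Continuous (deriv φ) := hφ.continuous_deriv (by simp)
  have hψs : HasCompactSupport (deriv φ) := hsupp.deriv
  -- Step 1: dominated convergence for `I α := ∫ τ in Iic x, deriv φ τ * (x - τ) ^ α`.
  have hI : Tendsto (fun α => ∫ τ in Set.Iic x, deriv φ τ * (x - τ) ^ α)
      (𝓝[>] (0 : ℝ)) (𝓝 (φ x)) := by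
    set bound : ℝ → ℝ := fun τ => |deriv φ τ| * max 1 (x - τ) with hbdef
    have hbc : Continuous bound :=
      (continuous_abs.comp hψc).mul (continuous_const.max (continuous_const.sub continuous_id))
    have hbs : HasCompactSupport bound := by
      have h1 : HasCompactSupport (abs ∘ deriv φ) := hψs.comp_left (g := abs) abs_zero
      exact h1.mul_right
    have hbint : Integrable bound := hbc.integrable_of_hasCompactSupport hbs
    have hmeas : ∀ᶠ α in 𝓝[>] (0 : ℝ), AEStronglyMeasurable
        (fun τ => deriv φ τ * (x - τ) ^ α) (volume.restrict (Set.Iic x)) := by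
      filter_upwards [self_mem_nhdsWithin] with α (hα : (0 : ℝ) < α)
      have hc : Continuous fun τ : ℝ => (x - τ) ^ α := by
        refine continuous_iff_continuousAt.2 fun τ => ?_
        exact (Real.continuousAt_rpow_const _ _ (Or.inr hα.le)).comp
          ((continuous_const.sub continuous_id).continuousAt)
      exact (hψc.mul hc).aestronglyMeasurable
    have hbd : ∀ᶠ α in 𝓝[>] (0 : ℝ), ∀ᵐ τ ∂(volume.restrict (Set.Iic x)),
        ‖deriv φ τ * (x - τ) ^ α‖ ≤ bound τ := by
      filter_upwards [Ioc_mem_nhdsGT_of_mem (Set.left_mem_Ico.mpr one_pos)] with α hα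
      refine (ae_restrict_iff' measurableSet_Iic).mpr (ae_of_all _ fun τ hτ => ?_)
      have h0 : (0 : ℝ) ≤ x - τ := sub_nonneg.mpr hτ
      have hle : (x - τ) ^ α ≤ max 1 (x - τ) := by
        rcases le_total (x - τ) 1 with h | h
        · exact le_max_of_le_left (Real.rpow_le_one h0 h hα.1.le)
        · refine le_max_of_le_right ?_
          calc (x - τ) ^ α ≤ (x - τ) ^ (1 : ℝ) :=
                Real.rpow_le_rpow_of_exponent_le h hα.2
            _ = x - τ := Real.rpow_one _
      have : ‖deriv φ τ * (x - τ) ^ α‖ = |deriv φ τ| * (x - τ) ^ α := by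
        rw [norm_mul, Real.norm_eq_abs, Real.norm_eq_abs,
          abs_of_nonneg (Real.rpow_nonneg h0 α)]
      rw [this]
      exact mul_le_mul_of_nonneg_left hle (abs_nonneg _)
    have hlim : ∀ᵐ τ ∂(volume.restrict (Set.Iic x)),
        Tendsto (fun α : ℝ => deriv φ τ * (x - τ) ^ α) (𝓝[>] (0 : ℝ))
          (𝓝 (deriv φ τ)) := by
      have hne : ∀ᵐ τ : ℝ ∂(volume.restrict (Set.Iic x)), τ ≠ x := by
        refine ae_iff.mpr ?_
        have hset : {a : ℝ | ¬a ≠ x} = {x} := by ext a; simp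
        rw [hset]
        exact le_zero_iff.mp
          ((Measure.restrict_apply_le _ _).trans_eq (Real.volume_singleton))
      filter_upwards [hne, ae_restrict_mem measurableSet_Iic] with τ hτne hτ
      have hb : (0 : ℝ) < x - τ := sub_pos.mpr (lt_of_le_of_ne hτ hτne)
      have hc : ContinuousAt ((x - τ) ^ · : ℝ → ℝ) 0 :=
        Real.continuousAt_const_rpow hb.ne'
      have h2 : Tendsto (fun α : ℝ => (x - τ) ^ α) (𝓝[>] (0 : ℝ))
          (𝓝 ((x - τ) ^ (0 : ℝ))) := hc.tendsto.mono_left nhdsWithin_le_nhds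
      simpa [Real.rpow_zero] using h2.const_mul (deriv φ τ)
    have key := tendsto_integral_filter_of_dominated_convergence
      (μ := volume.restrict (Set.Iic x)) (l := 𝓝[>] (0 : ℝ))
      (F := fun α τ => deriv φ τ * (x - τ) ^ α) (f := deriv φ)
      bound hmeas hbd hbint.integrableOn hlim
    rwa [HasCompactSupport.integral_Iic_deriv_eq (hφ.of_le (by simp)) hsupp x] at key
  -- Step 2: `1 / Γ(α + 1) → 1`.
  have hG : ContinuousAt Real.Gamma 1 := by
    refine (Real.differentiableAt_Gamma fun m => ?_).continuousAt
    have : (0 : ℝ) ≤ m := Nat.cast_nonneg m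
    intro h; linarith
  have hGt : Tendsto (fun α : ℝ => Real.Gamma (α + 1)) (𝓝[>] (0 : ℝ)) (𝓝 1) := by
    have hadd : Tendsto (fun α : ℝ => α + 1) (𝓝 (0 : ℝ)) (𝓝 1) := by
      simpa using (continuous_add_right (1 : ℝ)).tendsto (0 : ℝ)
    have := hG.tendsto.comp (hadd.mono_left (nhdsWithin_le_nhds (s := Set.Ioi (0 : ℝ))))
    simpa [Real.Gamma_one, Function.comp_def] using this
  have hinv : Tendsto (fun α : ℝ => 1 / Real.Gamma (α + 1)) (𝓝[>] (0 : ℝ)) (𝓝 1) := by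
    have := hGt.inv₀ one_ne_zero
    simpa [one_div] using this
  -- Step 3: assemble.
  have hcongr : ∀ᶠ α in 𝓝[>] (0 : ℝ),
      (1 / Real.Gamma (α + 1)) * ∫ τ in Set.Iic x, deriv φ τ * (x - τ) ^ α = J α φ x := by
    filter_upwards [self_mem_nhdsWithin] with α (hα : (0 : ℝ) < α)
    have hΓpos : 0 < Real.Gamma α := Real.Gamma_pos_of_pos hα
    rw [J, aux_ibp φ hφ hsupp x hα, Real.Gamma_add_one hα.ne', one_div, mul_inv]
    ring
  have := hinv.mul hI
  rw [one_mul] at this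
  exact this.congr' hcongr
end

section
/- Let λ > 0, α > 0 and x > 0. Then (1/Γ(α)) ∫_0^x ln(λτ) (x−τ)^{α−1} dτ = x^α · (ln(x) + ln(λ) − γ − ψ(1+α)) / Γ(1+α), where γ is the Euler–Mascheroni constant and ψ(1+α) = Γ'(1+α)/Γ(1+α) is the digamma function; that is, the distributional differintegral of order α (with lower limit 0) of ln(λz) is z^α (ln(λz) − γ − ψ(1+α))/Γ(1+α). -/
/-!
Substituting `τ = x t` turns the integral into
`x ^ α * ∫₀¹ (log (λ x) + log t) (1 - t) ^ (α - 1) dt`. The first part is `log (λ x) / α`.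
The second is the derivative at `s = 1` of the Beta function
`B(s, α) = ∫₀¹ t^(s-1) (1-t)^(α-1) dt` (differentiation under the integral sign), and
`B(s, α) = Γ(s) Γ(α) / Γ(s + α)` makes that derivative `(ψ(1) - ψ(1 + α)) / α`,
with `ψ(1) = Γ'(1) = -γ`.
-/

open Real MeasureTheory Set Filter
open scoped Topology

noncomputable def realBeta (s a : ℝ) : ℝ := ∫ t in (0:ℝ)..1, t ^ (s - 1) * (1 - t) ^ (a - 1)

lemma ofReal_rpow_mul_one_sub_rpow {t : ℝ} (ht : t ∈ Icc (0:ℝ) 1) (s a : ℝ) :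
    ((t ^ (s - 1) * (1 - t) ^ (a - 1) : ℝ) : ℂ) =
      (t : ℂ) ^ ((s : ℂ) - 1) * (1 - (t : ℂ)) ^ ((a : ℂ) - 1) := by
  rw [Complex.ofReal_mul, Complex.ofReal_cpow ht.1, Complex.ofReal_cpow (by linarith [ht.2])]
  push_cast
  ring_nf

lemma intervalIntegrable_rpow_mul_one_sub_rpow {s a : ℝ} (hs : 0 < s) (ha : 0 < a) :
    IntervalIntegrable (fun t : ℝ => t ^ (s - 1) * (1 - t) ^ (a - 1)) volume 0 1 := by
  refine (Complex.betaIntegral_convergent (u := s) (v := a) (by simpa) (by simpa)).norm.congr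
    fun t ht => ?_
  have ht' : t ∈ Icc (0:ℝ) 1 := Ioc_subset_Icc_self (by simpa using ht)
  simp only [← ofReal_rpow_mul_one_sub_rpow ht', Complex.norm_real, norm_eq_abs]
  exact abs_of_nonneg (mul_nonneg (rpow_nonneg ht'.1 _) (rpow_nonneg (sub_nonneg.2 ht'.2) _))

lemma realBeta_eq_Gamma_mul_Gamma_div {s a : ℝ} (hs : 0 < s) (ha : 0 < a) :
    realBeta s a = Gamma s * Gamma a / Gamma (s + a) := by
  have hB : Complex.betaIntegral s a = realBeta s a := by
    rw [Complex.betaIntegral, realBeta, ← intervalIntegral.integral_ofReal]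
    refine intervalIntegral.integral_congr fun t ht => ?_
    rw [uIcc_of_le zero_le_one] at ht
    exact (ofReal_rpow_mul_one_sub_rpow ht s a).symm
  have h := Complex.Gamma_mul_Gamma_eq_betaIntegral (s := s) (t := a) (by simpa) (by simpa)
  rw [hB, ← Complex.ofReal_add, Complex.Gamma_ofReal, Complex.Gamma_ofReal,
    Complex.Gamma_ofReal] at h
  rw [eq_div_iff (Gamma_pos_of_pos (add_pos hs ha)).ne', mul_comm]
  exact_mod_cast h.symm

lemma realBeta_one_left {a : ℝ} (ha : 0 < a) : realBeta 1 a = 1 / a := by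
  rw [realBeta_eq_Gamma_mul_Gamma_div one_pos ha, Gamma_one, add_comm, Gamma_add_one ha.ne']
  field_simp [(Gamma_pos_of_pos ha).ne']

lemma abs_log_mul_rpow_le {t : ℝ} (ht₀ : 0 < t) (ht₁ : t ≤ 1) (r : ℝ) {ε : ℝ} (hε : 0 < ε) :
    |log t| * t ^ r ≤ t ^ (r - ε) / ε := by
  have h := abs_log_mul_self_rpow_lt t ε ht₀ ht₁ hε
  rw [abs_mul, abs_of_pos (rpow_pos_of_pos ht₀ ε)] at h
  calc |log t| * t ^ r = |log t| * t ^ ε * t ^ (r - ε) := by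
        rw [mul_assoc, ← rpow_add ht₀]; ring_nf
    _ ≤ 1 / ε * t ^ (r - ε) := by gcongr
    _ = t ^ (r - ε) / ε := by ring

lemma hasDerivAt_realBeta_left {s₀ a : ℝ} (hs₀ : 0 < s₀) (ha : 0 < a) :
    IntervalIntegrable (fun t => log t * t ^ (s₀ - 1) * (1 - t) ^ (a - 1)) volume 0 1 ∧
      HasDerivAt (fun s => realBeta s a)
        (∫ t in (0:ℝ)..1, log t * t ^ (s₀ - 1) * (1 - t) ^ (a - 1)) s₀ := by
  have hball : Metric.ball s₀ (s₀ / 2) ∈ 𝓝 s₀ := Metric.ball_mem_nhds _ (by positivity)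
  refine intervalIntegral.hasDerivAt_integral_of_dominated_loc_of_deriv_le
    (F := fun s t => t ^ (s - 1) * (1 - t) ^ (a - 1))
    (F' := fun s t => log t * t ^ (s - 1) * (1 - t) ^ (a - 1))
    (bound := fun t => t ^ (s₀ / 4 - 1) * (1 - t) ^ (a - 1) / (s₀ / 4)) hball
    (Eventually.of_forall fun s => by fun_prop)
    (intervalIntegrable_rpow_mul_one_sub_rpow hs₀ ha) (by fun_prop)
    (ae_of_all _ fun t ht s hs => ?_)
    ((intervalIntegrable_rpow_mul_one_sub_rpow (by positivity) ha).div_const _)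
    (ae_of_all _ fun t ht s _ => ?_)
  all_goals rw [uIoc_of_le zero_le_one] at ht
  · have hs' : s₀ / 4 - 1 ≤ s - 1 - s₀ / 4 := by
      rw [Metric.mem_ball, dist_comm, Real.dist_eq] at hs
      linarith [(abs_lt.mp hs).2]
    have h₁ : 0 ≤ (1 - t) ^ (a - 1) := rpow_nonneg (by linarith [ht.2]) _
    rw [norm_mul, norm_mul, norm_eq_abs, norm_of_nonneg (rpow_pos_of_pos ht.1 _).le,
      norm_of_nonneg h₁, mul_div_right_comm]
    gcongr
    calc |log t| * t ^ (s - 1) ≤ t ^ (s - 1 - s₀ / 4) / (s₀ / 4) :=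
          abs_log_mul_rpow_le ht.1 ht.2 _ (by positivity)
      _ ≤ t ^ (s₀ / 4 - 1) / (s₀ / 4) := by
          gcongr ?_ / _
          exact rpow_le_rpow_of_exponent_ge ht.1 ht.2 hs'
  · simpa only [id, mul_one] using
      (((hasDerivAt_id s).sub_const 1).const_rpow ht.1).mul_const ((1 - t) ^ (a - 1))

lemma integral_log_mul_one_sub_rpow {a : ℝ} (ha : 0 < a) :
    ∫ t in (0:ℝ)..1, log t * (1 - t) ^ (a - 1) =
      (-eulerMascheroniConstant - deriv Gamma (1 + a) / Gamma (1 + a)) / a := by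
  have hΓ : DifferentiableAt ℝ Gamma (1 + a) :=
    differentiableAt_Gamma fun m => by linarith [m.cast_nonneg (α := ℝ)]
  have hΓ₀ : Gamma (1 + a) ≠ 0 := (Gamma_pos_of_pos (by linarith)).ne'
  have hquot : HasDerivAt (fun s => Gamma s * Gamma a / Gamma (s + a))
      ((-eulerMascheroniConstant * Gamma a * Gamma (1 + a) -
        Gamma 1 * Gamma a * deriv Gamma (1 + a)) / Gamma (1 + a) ^ 2) 1 :=
    (hasDerivAt_Gamma_one.mul_const _).div (hΓ.hasDerivAt.comp_add_const 1 a) hΓ₀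
  have hbeta := (hasDerivAt_realBeta_left one_pos ha).2.unique <|
    hquot.congr_of_eventuallyEq <|
      (eventually_gt_nhds one_pos).mono fun s hs => realBeta_eq_Gamma_mul_Gamma_div hs ha
  simp only [sub_self, rpow_zero, mul_one] at hbeta
  rw [hbeta, Gamma_one, add_comm, Gamma_add_one ha.ne']
  field_simp [(Gamma_pos_of_pos ha).ne']

lemma integral_log_mul_sub_rpow {c x : ℝ} (hc : 0 < c) (hx : 0 < x) (a : ℝ) :
    ∫ τ in (0:ℝ)..x, log (c * τ) * (x - τ) ^ (a - 1) =
      x ^ a * ∫ t in (0:ℝ)..1, (log (c * x) + log t) * (1 - t) ^ (a - 1) := by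
  have h := intervalIntegral.integral_comp_mul_left
    (fun τ => log (c * τ) * (x - τ) ^ (a - 1)) hx.ne' (a := 0) (b := 1)
  rw [mul_zero, mul_one, smul_eq_mul, eq_inv_mul_iff_mul_eq₀ hx.ne'] at h
  rw [← h, ← intervalIntegral.integral_const_mul, ← intervalIntegral.integral_const_mul]
  refine intervalIntegral.integral_congr_ae (ae_of_all _ fun t ht => ?_)
  rw [uIoc_of_le zero_le_one] at ht
  rw [← mul_assoc c, log_mul (by positivity) ht.1.ne', show x - x * t = x * (1 - t) by ring,
    mul_rpow hx.le (by linarith [ht.2]), rpow_sub_one hx.ne']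
  field_simp

/-- The distributional differintegral of order `α` (with lower limit `0`) of `ln(λz)` is
`z^α (ln(z) + ln(λ) − γ − ψ(1+α))/Γ(1+α)`, where `γ` is the Euler–Mascheroni constant
and `ψ(1+α) = Γ'(1+α)/Γ(1+α)` is the digamma function. -/
theorem differintegral_log (lam α x : ℝ) (hlam : 0 < lam) (hα : 0 < α) (hx : 0 < x) :
    (1 / Real.Gamma α) * ∫ τ in (0 : ℝ)..x, Real.log (lam * τ) * (x - τ) ^ (α - 1) =
      x ^ α * (Real.log x + Real.log lam - Real.eulerMascheroniConstant -
        deriv Real.Gamma (1 + α) / Real.Gamma (1 + α)) / Real.Gamma (1 + α) := by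
  have hpow : IntervalIntegrable (fun t : ℝ => (1 - t) ^ (α - 1)) volume 0 1 := by
    simpa using intervalIntegrable_rpow_mul_one_sub_rpow one_pos hα
  have hlog : IntervalIntegrable (fun t : ℝ => log t * (1 - t) ^ (α - 1)) volume 0 1 := by
    simpa using (hasDerivAt_realBeta_left one_pos hα).1
  have hpow_integral : ∫ t in (0:ℝ)..1, (1 - t) ^ (α - 1) = 1 / α := by
    simpa [realBeta] using realBeta_one_left hα
  simp_rw [integral_log_mul_sub_rpow hlam hx, add_mul]
  rw [intervalIntegral.integral_add (hpow.const_mul _) hlog, intervalIntegral.integral_const_mul,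
    hpow_integral, integral_log_mul_one_sub_rpow hα, log_mul hlam.ne' hx.ne', add_comm 1 α,
    Gamma_add_one hα.ne']
  field_simp [(Gamma_pos_of_pos hα).ne']
  ring
end

section
/- Let α > 0 and let z < 0. Then (1/Γ(α)) ∫_{−∞}^z (e^{−ζ} − 1)^{−1} (z−ζ)^{α−1} dζ = Σ_{k=1}^∞ e^{kz} / k^α; that is, the distributional differintegral of order α of 1/(e^{−z} − 1) is the polylogarithm Li_α(e^z). -/
open MeasureTheory Real Set

/-! For `ζ < 0` the kernel expands as a geometric series,
`(e^{-ζ} - 1)⁻¹ = ∑_{k ≥ 1} e^{kζ}`, and each exponential `e^{bζ}` (`b > 0`) is an eigenfunction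
of the Riemann–Liouville integral: substituting `ζ = z - x` turns
`∫_{-∞}^z e^{bζ} (z - ζ)^{α-1} dζ` into `e^{bz} ∫_0^∞ x^{α-1} e^{-bx} dx = Γ(α) e^{bz} / b^α`.
All terms are nonnegative and their integrals are dominated by `Γ(α) e^{kz}`, a convergent
geometric series, so the sum and the integral may be interchanged. -/

theorem hasSum_exp_succ_mul_of_neg {u : ℝ} (hu : u < 0) :
    HasSum (fun k : ℕ => exp ((k + 1) * u)) (exp (-u) - 1)⁻¹ := by
  have hterm : (fun k : ℕ => exp ((k + 1) * u)) = fun k => exp u * exp u ^ k := by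
    ext k
    rw [← exp_nat_mul, ← exp_add]
    ring_nf
  have hlimit : (exp (-u) - 1)⁻¹ = exp u * (1 - exp u)⁻¹ := by
    have : exp u ≠ 1 := (exp_lt_one_iff.mpr hu).ne
    rw [exp_neg]
    field_simp
  rw [hterm, hlimit]
  exact (hasSum_geometric_of_lt_one (exp_pos u).le (exp_lt_one_iff.mpr hu)).mul_left _

theorem summable_exp_succ_mul_div_rpow {u : ℝ} (hu : u < 0) {α : ℝ} (hα : 0 ≤ α) :
    Summable fun k : ℕ => exp ((k + 1) * u) / ((k : ℝ) + 1) ^ α :=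
  (hasSum_exp_succ_mul_of_neg hu).summable.of_nonneg_of_le (fun k => by positivity)
    fun k => div_le_self (exp_pos _).le (one_le_rpow (by simp) hα)

theorem hasSum_integral_of_nonneg {X ι : Type*} [MeasurableSpace X] {μ : Measure X} [Countable ι]
    {F : ι → X → ℝ} {f : X → ℝ} (hF_int : ∀ i, Integrable (F i) μ)
    (hF_nonneg : ∀ i, 0 ≤ᵐ[μ] F i) (hf : ∀ᵐ a ∂μ, HasSum (fun i => F i a) (f a))
    (hsum : Summable fun i => ∫ a, F i a ∂μ) :
    HasSum (fun i => ∫ a, F i a ∂μ) (∫ a, f a ∂μ) := by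
  have hnorm (i : ι) : ∫ a, ‖F i a‖ ∂μ = ∫ a, F i a ∂μ :=
    integral_congr_ae <| (hF_nonneg i).mono fun a ha => norm_of_nonneg ha
  have := hasSum_integral_of_summable_integral_norm hF_int (by simpa only [hnorm] using hsum)
  rwa [integral_congr_ae (hf.mono fun a ha => ha.tsum_eq)] at this

section ChangeOfVariables

variable {E : Type*} [NormedAddCommGroup E] (f : ℝ → E) (z : ℝ)

theorem preimage_const_sub_Iic_self : (fun x : ℝ => z - x) ⁻¹' Iic z = Ici 0 := by
  ext x
  simp

theorem integrableOn_Iic_iff_integrableOn_Ioi_const_sub :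
    IntegrableOn f (Iic z) ↔ IntegrableOn (fun x => f (z - x)) (Ioi 0) := by
  rw [← integrableOn_Ici_iff_integrableOn_Ioi, ← preimage_const_sub_Iic_self z]
  exact ((Measure.measurePreserving_sub_left volume z).integrableOn_comp_preimage
    (MeasurableEquiv.subLeft z).measurableEmbedding).symm

theorem setIntegral_Iic_eq_setIntegral_Ioi_const_sub [NormedSpace ℝ E] :
    ∫ ζ in Iic z, f ζ = ∫ x in Ioi 0, f (z - x) := by
  rw [← integral_Ici_eq_integral_Ioi, ← preimage_const_sub_Iic_self z]
  exact ((Measure.measurePreserving_sub_left volume z).setIntegral_preimage_emb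
    (MeasurableEquiv.subLeft z).measurableEmbedding f _).symm

end ChangeOfVariables

section ExponentialEigenfunction

variable {α b : ℝ} (z : ℝ)

theorem exp_mul_mul_rpow_const_sub_sub (x : ℝ) :
    exp (b * (z - x)) * (z - (z - x)) ^ (α - 1) = exp (b * z) * (x ^ (α - 1) * exp (-(b * x))) := by
  rw [sub_sub_cancel, mul_sub, sub_eq_add_neg, exp_add]
  ring

theorem integrableOn_exp_mul_mul_rpow_sub (hα : 0 < α) (hb : 0 < b) :
    IntegrableOn (fun ζ => exp (b * ζ) * (z - ζ) ^ (α - 1)) (Iic z) := by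
  rw [integrableOn_Iic_iff_integrableOn_Ioi_const_sub]
  simp only [exp_mul_mul_rpow_const_sub_sub]
  have := integrableOn_rpow_mul_exp_neg_mul_rpow (by linarith : -1 < α - 1) one_pos hb
  simp only [rpow_one, neg_mul] at this
  exact this.const_mul _

theorem integral_exp_mul_mul_rpow_sub (hα : 0 < α) (hb : 0 < b) :
    ∫ ζ in Iic z, exp (b * ζ) * (z - ζ) ^ (α - 1) = Gamma α * (exp (b * z) / b ^ α) := by
  rw [setIntegral_Iic_eq_setIntegral_Ioi_const_sub]
  simp only [exp_mul_mul_rpow_const_sub_sub]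
  rw [integral_const_mul, integral_rpow_mul_exp_neg_mul_Ioi hα hb, one_div, inv_rpow hb.le]
  ring

end ExponentialEigenfunction

/-- The distributional differintegral of order `α` of `1/(e^(−z) − 1)` is the
polylogarithm `Li_α(e^z) = Σ_{k≥1} e^(kz)/k^α` (for `z < 0`). -/
theorem differintegral_polylog (α z : ℝ) (hα : 0 < α) (hz : z < 0) :
    (1 / Real.Gamma α) * ∫ ζ in Set.Iic z, (Real.exp (-ζ) - 1)⁻¹ * (z - ζ) ^ (α - 1) =
      ∑' k : ℕ, Real.exp (((k : ℝ) + 1) * z) / ((k : ℝ) + 1) ^ α := by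
  have hk (k : ℕ) : (0 : ℝ) < k + 1 := by positivity
  have hexpand : ∀ᵐ ζ ∂volume.restrict (Iic z), HasSum
      (fun k : ℕ => exp ((k + 1) * ζ) * (z - ζ) ^ (α - 1)) ((exp (-ζ) - 1)⁻¹ * (z - ζ) ^ (α - 1)) :=
    ae_restrict_of_forall_mem measurableSet_Iic fun ζ hζ =>
      (hasSum_exp_succ_mul_of_neg (hζ.out.trans_lt hz)).mul_right _
  have hterms := hasSum_integral_of_nonneg
    (fun k => integrableOn_exp_mul_mul_rpow_sub z hα (hk k))
    (fun k => ae_restrict_of_forall_mem measurableSet_Iic fun ζ (hζ : ζ ≤ z) =>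
      mul_nonneg (exp_pos _).le (rpow_nonneg (sub_nonneg.mpr hζ) _))
    hexpand
    (by simpa only [integral_exp_mul_mul_rpow_sub z hα (hk _)] using
      (summable_exp_succ_mul_div_rpow hz hα.le).mul_left (Gamma α))
  simp only [integral_exp_mul_mul_rpow_sub z hα (hk _)] at hterms
  rw [← hterms.tsum_eq, tsum_mul_left, one_div, inv_mul_cancel_left₀ (Gamma_pos_of_pos hα).ne']
end

section
/- Let f : ℝ → ℝ be continuous with compact support contained in [0, ∞), let α > 0 and let s > 0. Then ∫_0^∞ e^{−st} (J^α f)(t) dt = s^{−α} · ∫_0^∞ e^{−st} f(t) dt, where (J^α f)(t) = (1/Γ(α)) ∫_0^t f(τ)(t−τ)^{α−1} dτ; that is, the Laplace transform of the distributional differintegral of order α of f equals s^{−α} times the Laplace transform of f. -/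
open MeasureTheory Real

/-- The distributional differintegral of order `α` with lower limit `0`. -/
noncomputable def J₀ (α : ℝ) (f : ℝ → ℝ) (t : ℝ) : ℝ :=
  (1 / Real.Gamma α) * ∫ τ in (0 : ℝ)..t, f τ * (t - τ) ^ (α - 1)

/-!
Write `φ = 1_{(0,∞)} e^{-s·} f` and `k(u) = 1_{(0,∞)}(u) e^{-su} u^{α-1}`. Since
`e^{-st} = e^{-sτ} e^{-s(t-τ)}`, for `t > 0` the damped differintegral `e^{-st} J^α f (t)`
is `Γ(α)⁻¹ (φ ⋆ k)(t)`, and `φ ⋆ k` vanishes for `t ≤ 0`. Fubini gives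
`∫ φ ⋆ k = ∫ φ · ∫ k`, and `∫ k = Γ(α) s^{-α}` is Euler's integral.
-/

open Set
open scoped Convolution

noncomputable def gammaKernel (α s : ℝ) : ℝ → ℝ :=
  (Ioi 0).indicator fun u => exp (-s * u) * u ^ (α - 1)

section GammaKernel

variable {α s : ℝ}

lemma integrable_gammaKernel (hα : 0 < α) (hs : 0 < s) : Integrable (gammaKernel α s) := by
  refine (integrable_indicator_iff measurableSet_Ioi).2 ?_
  refine (integrableOn_rpow_mul_exp_neg_mul_rpow (p := 1) (s := α - 1) (b := s)
    (by linarith) one_pos hs).congr_fun (fun u _ => ?_) measurableSet_Ioi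
  simp [rpow_one, mul_comm]

lemma integral_gammaKernel (hα : 0 < α) (hs : 0 < s) :
    ∫ u, gammaKernel α s u = Gamma α * s ^ (-α) := by
  calc ∫ u, gammaKernel α s u = ∫ u in Ioi 0, u ^ (α - 1) * exp (-(s * u)) := by
        rw [gammaKernel, integral_indicator measurableSet_Ioi]
        congr 1 with u
        rw [neg_mul, mul_comm]
    _ = Gamma α * s ^ (-α) := by
        rw [integral_rpow_mul_exp_neg_mul_Ioi hα hs, one_div, inv_rpow hs.le, ← rpow_neg hs.le,
          mul_comm]

lemma support_gammaKernel_subset : Function.support (gammaKernel α s) ⊆ Ioi 0 :=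
  Set.support_indicator_subset

end GammaKernel

section Convolution

variable (f : ℝ → ℝ) (α s : ℝ)

lemma indicator_mul_gammaKernel_sub {t : ℝ} (τ : ℝ) :
    (Ioi 0).indicator (fun τ => exp (-s * τ) * f τ) τ * gammaKernel α s (t - τ) =
      (Ioo 0 t).indicator (fun τ => exp (-s * t) * (f τ * (t - τ) ^ (α - 1))) τ := by
  by_cases hτ : τ ∈ Ioo 0 t
  · have hτ' : t - τ ∈ Ioi 0 := sub_pos.2 hτ.2
    rw [gammaKernel, indicator_of_mem hτ, indicator_of_mem (show τ ∈ Ioi 0 from hτ.1),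
      indicator_of_mem hτ', show -s * t = -s * τ + -s * (t - τ) by ring, exp_add]
    ring
  · rw [indicator_of_notMem hτ]
    rcases not_and_or.1 hτ with hτ | hτ
    · rw [indicator_of_notMem (show τ ∉ Ioi 0 from hτ), zero_mul]
    · rw [gammaKernel, indicator_of_notMem (show t - τ ∉ Ioi 0 by simpa using hτ), mul_zero]

lemma convolution_gammaKernel_eq {t : ℝ} (ht : 0 < t) :
    ((Ioi 0).indicator (fun τ => exp (-s * τ) * f τ) ⋆ gammaKernel α s) t =
      exp (-s * t) * ∫ τ in (0 : ℝ)..t, f τ * (t - τ) ^ (α - 1) := by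
  simp only [convolution_def, ContinuousLinearMap.lsmul_apply, smul_eq_mul,
    indicator_mul_gammaKernel_sub]
  rw [integral_indicator measurableSet_Ioo, integral_const_mul,
    intervalIntegral.integral_of_le ht.le, integral_Ioc_eq_integral_Ioo]

lemma support_convolution_gammaKernel_subset :
    Function.support ((Ioi 0).indicator (fun τ => exp (-s * τ) * f τ) ⋆ gammaKernel α s) ⊆
      Ioi 0 :=
  (support_convolution_subset _).trans <| by
    rintro _ ⟨x, hx, y, hy, rfl⟩
    exact add_pos (support_indicator_subset hx) (support_gammaKernel_subset hy)

end Convolution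

theorem integral_Ioi_exp_mul_J₀ {f : ℝ → ℝ} {α s : ℝ} (hα : 0 < α) (hs : 0 < s)
    (hf : IntegrableOn (fun t => exp (-s * t) * f t) (Ioi 0)) :
    ∫ t in Ioi 0, exp (-s * t) * J₀ α f t =
      s ^ (-α) * ∫ t in Ioi 0, exp (-s * t) * f t := by
  set φ := (Ioi (0 : ℝ)).indicator fun τ => exp (-s * τ) * f τ
  have hJ : ∀ t ∈ Ioi (0 : ℝ),
      exp (-s * t) * J₀ α f t = (Gamma α)⁻¹ * (φ ⋆ gammaKernel α s) t := fun t ht => by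
    rw [convolution_gammaKernel_eq f α s ht, J₀]
    ring
  calc ∫ t in Ioi 0, exp (-s * t) * J₀ α f t
      = (Gamma α)⁻¹ * ∫ t in Ioi 0, (φ ⋆ gammaKernel α s) t := by
        rw [setIntegral_congr_fun measurableSet_Ioi hJ, integral_const_mul]
    _ = (Gamma α)⁻¹ * ∫ t, (φ ⋆ gammaKernel α s) t := by
        rw [setIntegral_eq_integral_of_forall_compl_eq_zero fun t ht =>
          Function.notMem_support.1 fun h => ht (support_convolution_gammaKernel_subset f α s h)]
    _ = (Gamma α)⁻¹ * ((∫ t in Ioi 0, exp (-s * t) * f t) * (Gamma α * s ^ (-α))) := by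
        rw [integral_convolution _ ((integrable_indicator_iff measurableSet_Ioi).2 hf)
          (integrable_gammaKernel hα hs), integral_indicator measurableSet_Ioi,
          integral_gammaKernel hα hs, ContinuousLinearMap.lsmul_apply, smul_eq_mul]
    _ = s ^ (-α) * ∫ t in Ioi 0, exp (-s * t) * f t := by
        field_simp [(Gamma_pos_of_pos hα).ne']

theorem laplace_differintegral_general (f : ℝ → ℝ) (hf : Continuous f)
    (hsupp : HasCompactSupport f)
    (α s : ℝ) (hα : 0 < α) (hs : 0 < s) :
    ∫ t in Set.Ioi (0 : ℝ), Real.exp (-s * t) * J₀ α f t =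
      s ^ (-α) * ∫ t in Set.Ioi (0 : ℝ), Real.exp (-s * t) * f t :=
  integral_Ioi_exp_mul_J₀ hα hs <|
    ((continuous_exp.comp (continuous_const.mul continuous_id)).mul hf
      |>.integrable_of_hasCompactSupport hsupp.mul_left).integrableOn

/-- The Laplace transform of the distributional differintegral of order `α` of `f`
equals `s^(−α)` times the Laplace transform of `f`. -/
theorem laplace_differintegral (f : ℝ → ℝ) (hf : Continuous f)
    (hsupp : HasCompactSupport f) (hpos : tsupport f ⊆ Set.Ici 0)
    (α s : ℝ) (hα : 0 < α) (hs : 0 < s) :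
    ∫ t in Set.Ioi (0 : ℝ), Real.exp (-s * t) * J₀ α f t =
      s ^ (-α) * ∫ t in Set.Ioi (0 : ℝ), Real.exp (-s * t) * f t :=
  laplace_differintegral_general f hf hsupp α s hα hs
end
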